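/- (Sharp threshold in μ for spreading.) Consider the free boundary problem with h₀ < l*, and define μ* = sup{μ > 0 : h∞(μ) < ∞}, assuming this set is nonempty and bounded. Assume: (a) h∞(μ) ≤ l* whenever h∞(μ) < ∞; (b) h_μ(t) is strictly increasing in μ for each t > 0; (c) h_μ(t) depends continuously on μ; (d) h_μ(t) is increasing in t. Then h∞(μ) = ∞ for all μ > μ*, and h∞(μ) < ∞ for all μ ≤ μ*. -/
import Mathlib


/-- sharp threshold in `μ` for spreading.  For a family of free
boundaries `h μ t` satisfying: (a) boundedness implies `h μ t ≤ l*`, (b) strict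
monotonicity in `μ`, (c) continuity in `μ`, (d) monotonicity in `t`, and with
the set `S = {μ > 0 : h∞(μ) < ∞}` nonempty and bounded above, let
`μ* = sup S`.  Then spreading (`h∞(μ) = ∞`) occurs for every `μ > μ*` and
vanishing (`h∞(μ) < ∞`) occurs for every `0 < μ ≤ μ*`. -/
theorem sharp_threshold_in_mu
    (h : ℝ → ℝ → ℝ) (lstar h0 : ℝ) (hh0 : 0 < h0) (hh0l : h0 < lstar)
    (S : Set ℝ)
    (hS : S = {μ : ℝ | 0 < μ ∧ ∃ c : ℝ, ∀ t, 0 < t → h μ t ≤ c})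
    (hSne : S.Nonempty) (hSbdd : BddAbove S)
    -- (a) if `h∞(μ) < ∞` then `h∞(μ) ≤ l*`:
    (ha : ∀ μ ∈ S, ∀ t, 0 < t → h μ t ≤ lstar)
    -- (b) strict monotonicity in `μ`:
    (hb : ∀ t, 0 < t → StrictMonoOn (fun μ => h μ t) (Set.Ioi 0))
    -- (c) continuity in `μ`:
    (hc : ∀ t, 0 < t → ContinuousOn (fun μ => h μ t) (Set.Ioi 0))
    -- (d) monotonicity in `t`:
    (hd : ∀ μ, 0 < μ → MonotoneOn (h μ) (Set.Ioi 0)) :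
    (∀ μ, sSup S < μ → ∀ c : ℝ, ∃ t, 0 < t ∧ c < h μ t) ∧
    (∀ μ, 0 < μ → μ ≤ sSup S → ∃ c : ℝ, ∀ t, 0 < t → h μ t ≤ c) := by
  obtain ⟨a, haS⟩ := hSne
  have ha0 : 0 < a := by rw [hS] at haS; exact haS.1
  have hsup_pos : 0 < sSup S := lt_of_lt_of_le ha0 (le_csSup hSbdd haS)
  constructor
  · intro μ hμ c
    have hμ0 : 0 < μ := hsup_pos.trans hμ
    have hnot : μ ∉ S := fun hmem => absurd (le_csSup hSbdd hmem) (not_le.mpr hμ)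
    rw [hS] at hnot
    simp only [Set.mem_setOf_eq, not_and, not_exists, not_forall] at hnot
    obtain ⟨t, ht, hlt⟩ := hnot hμ0 c
    exact ⟨t, ht, not_le.mp hlt⟩
  · intro μ hμ0 hμle
    refine ⟨lstar, fun t ht => ?_⟩
    rcases lt_or_eq_of_le hμle with hlt | heq
    · obtain ⟨μ₁, hμ₁S, hμμ₁⟩ := exists_lt_of_lt_csSup ⟨a, haS⟩ hlt
      have hμ₁0 : 0 < μ₁ := by rw [hS] at hμ₁S; exact hμ₁S.1
      have := hb t ht (Set.mem_Ioi.mpr hμ0) (Set.mem_Ioi.mpr hμ₁0) hμμ₁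
      exact le_of_lt (lt_of_lt_of_le this (ha μ₁ hμ₁S t ht))
    · by_contra hcon
      push_neg at hcon
      have hcont : ContinuousWithinAt (fun μ => h μ t) (Set.Ioi 0) μ :=
        hc t ht μ (Set.mem_Ioi.mpr hμ0)
      have hev : ∀ᶠ x in nhdsWithin μ (Set.Ioi 0), lstar < h x t :=
        hcont.eventually (eventually_gt_nhds hcon)
      rw [Filter.eventually_iff, Metric.mem_nhdsWithin_iff] at hev
      obtain ⟨ε, hε, hball⟩ := hev
      obtain ⟨μ₁, hμ₁S, hμμ₁⟩ := exists_lt_of_lt_csSup ⟨a, haS⟩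
        (by rw [← heq]; exact sub_lt_self μ hε)
      have hμ₁0 : 0 < μ₁ := by rw [hS] at hμ₁S; exact hμ₁S.1
      have hμ₁le : μ₁ ≤ μ := heq ▸ le_csSup hSbdd hμ₁S
      have hdist : dist μ₁ μ < ε := by
        rw [Real.dist_eq, abs_lt]
        constructor <;> [linarith [heq ▸ hμμ₁]; linarith]
      exact absurd (ha μ₁ hμ₁S t ht)
        (not_le.mpr (hball ⟨Metric.mem_ball.mpr hdist, Set.mem_Ioi.mpr hμ₁0⟩))
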